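/- In a discrete median algebra, for all x,y the cardinality of the interval [x,y] satisfies d(x,y) + 1 ≤ |[x,y]| ≤ 2^{d(x,y)}, where d(x,y)=|Δ(x,y)|. -/

import Mathlib

/-- A median algebra: a set with a ternary median operation satisfying (Med 1)-(Med 3). -/
structure MedianAlgebra (M : Type*) where
  m : M → M → M → M
  comm₁ : ∀ x y z, m x y z = m x z y
  comm₂ : ∀ x y z, m x y z = m y z x
  idem : ∀ x y, m x x y = x
  assoc : ∀ x y z u v, m (m x y z) u v = m x (m y u v) (m z u v)

namespace MedianAlgebra

variable {M : Type*}

/-- The interval `[x,y] = {z | z = m x y z}`. -/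
def I (A : MedianAlgebra M) (x y : M) : Set M := {z | z = A.m x y z}

/-- A subset is convex if it contains the interval between any two of its points. -/
def Conv (A : MedianAlgebra M) (C : Set M) : Prop :=
  ∀ x ∈ C, ∀ y ∈ C, A.I x y ⊆ C

/-- A half space is a convex set with convex complement. -/
def Halfspace (A : MedianAlgebra M) (H : Set M) : Prop :=
  A.Conv H ∧ A.Conv Hᶜ

/-- The convex hull of a set: the intersection of all convex sets containing it. -/
def hull (A : MedianAlgebra M) (X : Set M) : Set M :=
  ⋂₀ {C | A.Conv C ∧ X ⊆ C}

/-- The separator `Δ(X,Y)`: half spaces containing `X` and disjoint from `Y`. -/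
def sep (A : MedianAlgebra M) (X Y : Set M) : Set (Set M) :=
  {H | A.Halfspace H ∧ X ⊆ H ∧ Y ⊆ Hᶜ}

variable (A : MedianAlgebra M)

lemma comm₃ (x y z : M) : A.m x y z = A.m y x z := by rw [A.comm₂, A.comm₁]

lemma comm₄ (x y z : M) : A.m x y z = A.m z x y := by rw [A.comm₂, A.comm₂]

lemma comm₅ (x y z : M) : A.m x y z = A.m z y x := by rw [A.comm₄, A.comm₁]

lemma idem' (x y : M) : A.m x y y = y := by rw [A.comm₂, A.idem]

lemma idem'' (x y : M) : A.m x y x = x := by rw [A.comm₁, A.idem]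

lemma mem_I {A : MedianAlgebra M} {z : M} {x y : M} : z ∈ A.I x y ↔ z = A.m x y z := Iff.rfl

lemma I_comm (x y : M) : A.I x y = A.I y x := by
  ext z; simp only [mem_I]; rw [A.comm₃]

lemma left_mem_I (x y : M) : x ∈ A.I x y := (A.idem'' x y).symm

lemma right_mem_I (x y : M) : y ∈ A.I x y := by
  simp only [mem_I]; exact (A.idem' x y).symm

lemma m_mem_I (x y z : M) : A.m x y z ∈ A.I x y := by
  simp only [mem_I]
  conv_rhs => rw [A.comm₄ x y (A.m x y z), A.comm₄ x y z, A.assoc, A.idem, A.idem'' y x]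
  exact A.comm₄ x y z

lemma m_mem_I' (x y z : M) : A.m x y z ∈ A.I x z := by
  have := A.m_mem_I x z y
  rwa [A.comm₁ x z y] at this

lemma m_mem_I'' (x y z : M) : A.m x y z ∈ A.I y z := by
  have := A.m_mem_I y z x
  rwa [← A.comm₂ x y z] at this

/-- From `z = A.m x y z` get `A.m z x y = z` etc. -/
lemma eq_of_mem {A : MedianAlgebra M} {z x y : M} (h : z ∈ A.I x y) : A.m z x y = z := by
  rw [← A.comm₄ x y z]; exact h.symm

lemma mem_of_eq {A : MedianAlgebra M} {z x y : M} (h : A.m z x y = z) : z ∈ A.I x y := by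
  show z = A.m x y z
  rw [A.comm₄ x y z]; exact h.symm

lemma I_trans {A : MedianAlgebra M} {x y z w : M} (hz : z ∈ A.I x w) (hw : w ∈ A.I x y) :
    z ∈ A.I x y := by
  have hz' := eq_of_mem hz
  have key : A.m (A.m z x w) x y = A.m z x w := by
    rw [A.assoc, A.idem, eq_of_mem hw]
  show z = A.m x y z
  conv_rhs => rw [← hz', A.comm₄ x y (A.m z x w), key]
  exact hz'.symm

lemma I_antisymm {A : MedianAlgebra M} {x z w : M} (hz : z ∈ A.I x w) (hw : w ∈ A.I x z) :
    z = w := by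
  calc z = A.m x w z := hz
  _ = A.m x z w := A.comm₁ x w z
  _ = w := hw.symm

lemma conv_I (x y : M) : A.Conv (A.I x y) := by
  intro u hu v hv z hz
  have hz' := eq_of_mem hz
  have key : A.m (A.m z u v) x y = A.m z u v := by
    rw [A.assoc, eq_of_mem hu, eq_of_mem hv]
  show z = A.m x y z
  conv_rhs => rw [← hz', A.comm₄ x y (A.m z u v), key]
  exact hz'.symm

lemma L2 {A : MedianAlgebra M} {w x y a : M} (hw : w ∈ A.I x y) (ha : a ∈ A.I y w) :
    w ∈ A.I x a := by
  have k1 : A.m (A.m a y w) x w = w := by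
    rw [A.assoc, show A.m y x w = w from by rw [A.comm₃ y x w]; exact hw.symm,
      A.idem'' w x, A.idem' a w]
  have ha' : A.m a y w = a := eq_of_mem ha
  show w = A.m x a w
  conv_rhs => rw [← ha', A.comm₃ x (A.m a y w) w, k1]

lemma L3 {A : MedianAlgebra M} {r p q : M} (hr : r ∈ A.I p q) (t : M) :
    r ∈ A.I (A.m p t r) q := by
  have h3 : r ∈ A.I p (A.m q r t) := L2 hr (A.m_mem_I q r t)
  show r = A.m (A.m p t r) q r
  conv_rhs => rw [A.assoc, A.idem'' r q]
  rw [show A.m t q r = A.m q r t from (A.comm₄ q r t).symm]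
  exact h3

lemma L5 {A : MedianAlgebra M} {p c u : M} (d r : M) (hp : p ∈ A.I c u) :
    A.m p (A.m c d r) r ∈ A.I (A.m c d r) u := by
  have hp' : A.m p c u = p := eq_of_mem hp
  have key : A.m (A.m c d r) u (A.m p (A.m c d r) r) = A.m p (A.m c d r) r := by
    conv_lhs => enter [4, 4]; rw [← A.idem'' r d]
    conv_lhs =>
      rw [← A.assoc p c r d r,
        A.comm₃ (A.m c d r) u (A.m (A.m p c r) d r),
        ← A.assoc u c (A.m p c r) d r,
        A.comm₅ u c (A.m p c r), A.comm₅ p c r, A.comm₁ r c p,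
        A.assoc r p c c u, hp', A.idem c u,
        A.comm₃ r p c, A.assoc p r c d r, A.idem'' r d,
        A.comm₁ p r (A.m c d r)]
  exact key.symm

lemma joinKey {A : MedianAlgebra M} {p q r c d u : M}
    (hp : p ∈ A.I c u) (hq : q ∈ A.I d u) (hr : r ∈ A.I p q) :
    r ∈ A.I (A.m c d r) u := by
  have h1 : r ∈ A.I (A.m p (A.m c d r) r) q := L3 hr (A.m c d r)
  have h2 : r ∈ A.I q (A.m p (A.m c d r) r) := by rwa [A.I_comm] at h1
  have h3 : r ∈ A.I (A.m q (A.m c d r) r) (A.m p (A.m c d r) r) := L3 h2 (A.m c d r)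
  have p2 : A.m p (A.m c d r) r ∈ A.I (A.m c d r) u := L5 d r hp
  have q2 : A.m q (A.m c d r) r ∈ A.I (A.m c d r) u := by
    have := L5 c r hq
    rwa [A.comm₃ d c r] at this
  exact A.conv_I (A.m c d r) u _ q2 _ p2 h3



lemma zKey {A : MedianAlgebra M} {j k c d w : M} (hj : j ∈ A.I c w) (hk : k ∈ A.I d w) :
    A.m c j k ∈ A.I j d := by
  have hj2 : j = A.m c j w := hj.trans (A.comm₁ c w j)
  have key : A.m (A.m c j k) j d = A.m c j k := by
    conv_lhs => enter [3]; rw [hj2]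
    rw [A.comm₄ (A.m c j k) (A.m c j w) d, A.comm₄ c j k, A.comm₄ c j w,
      ← A.assoc d k w c j, A.comm₃ d k w, eq_of_mem hk, ← A.comm₄ c j k]
  show A.m c j k = A.m j d (A.m c j k)
  conv_rhs => rw [A.comm₄ j d (A.m c j k), key]

/-- The join of a convex set with a point. -/
def join (A : MedianAlgebra M) (C : Set M) (w : M) : Set M :=
  {z | ∃ c ∈ C, z ∈ A.I c w} ∪ {w}

lemma subset_join (C : Set M) (w : M) : C ⊆ A.join C w := fun c hc =>
  Or.inl ⟨c, hc, A.left_mem_I c w⟩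

lemma mem_join (C : Set M) (w : M) : w ∈ A.join C w := Or.inr rfl

lemma conv_join {C : Set M} (hC : A.Conv C) (w : M) : A.Conv (A.join C w) := by
  rintro p hp q hq z hz
  have hw : ∀ v, v ∈ A.I w w → v ∈ A.join C w := by
    intro v hv
    have : v = w := by
      have := hv; rw [mem_I, A.idem] at this; exact this
    exact this ▸ A.mem_join C w
  -- helper for one endpoint being w
  have hone : ∀ c ∈ C, ∀ p ∈ A.I c w, ∀ z ∈ A.I p w, z ∈ A.join C w := by
    intro c hc p hp z hz
    have hz' : z ∈ A.I w p := by rwa [A.I_comm] at hz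
    have hp' : p ∈ A.I w c := by rwa [A.I_comm] at hp
    exact Or.inl ⟨c, hc, by rw [A.I_comm]; exact I_trans hz' hp'⟩
  rcases hp with ⟨c, hc, hpc⟩ | hp
  · rcases hq with ⟨d, hd, hqd⟩ | hq
    · exact Or.inl ⟨A.m c d z, hC c hc d hd (A.m_mem_I c d z), joinKey hpc hqd hz⟩
    · simp only [Set.mem_singleton_iff] at hq; subst hq
      exact hone c hc p hpc z hz
  · simp only [Set.mem_singleton_iff] at hp; subst hp
    rcases hq with ⟨d, hd, hqd⟩ | hq
    · have hz' : z ∈ A.I q p := by rwa [A.I_comm] at hz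
      exact hone d hd q hqd z hz'
    · simp only [Set.mem_singleton_iff] at hq; subst hq
      exact hw z hz

lemma conv_empty : A.Conv (∅ : Set M) := by intro u hu; exact absurd hu (by simp)

lemma conv_singleton (x : M) : A.Conv ({x} : Set M) := by
  rintro u hu v hv z hz
  simp only [Set.mem_singleton_iff] at hu hv ⊢
  subst hu; subst hv
  have := hz; rw [mem_I, A.idem] at this; exact this

lemma conv_sUnion_chain {c : Set (Set M)} (hchain : IsChain (· ⊆ ·) c)
    (hconv : ∀ C ∈ c, A.Conv C) : A.Conv (⋃₀ c) := by
  rintro u ⟨Cu, hCu, hu⟩ v ⟨Cv, hCv, hv⟩ z hz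
  rcases hchain.total hCu hCv with h | h
  · exact ⟨Cv, hCv, hconv Cv hCv u (h hu) v hv hz⟩
  · exact ⟨Cu, hCu, hconv Cu hCu u hu v (h hv) hz⟩

lemma sep_thm {A : MedianAlgebra M} {C D : Set M} (hC : A.Conv C) (hD : A.Conv D)
    (hdisj : Disjoint C D) :
    ∃ H, A.Halfspace H ∧ C ⊆ H ∧ D ⊆ Hᶜ := by
  -- first Zorn: maximal convex superset of C disjoint from D
  obtain ⟨Cs, hCCs, hCs, hCsmax⟩ :=
    zorn_subset_nonempty {E | A.Conv E ∧ C ⊆ E ∧ Disjoint E D}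
      (fun c hc hchain hne => ⟨⋃₀ c,
        ⟨A.conv_sUnion_chain hchain (fun E hE => (hc hE).1),
          hne.elim fun E hE => (hc hE).2.1.trans (Set.subset_sUnion_of_mem hE),
          Set.disjoint_sUnion_left.mpr fun E hE => (hc hE).2.2⟩,
        fun E hE => Set.subset_sUnion_of_mem hE⟩)
      C ⟨hC, subset_rfl, hdisj⟩
  obtain ⟨hCsConv, hCsC, hCsD⟩ := hCs
  have hCsD' : Disjoint Cs D := hCsD
  -- second Zorn: maximal convex superset of D disjoint from Cs
  obtain ⟨Ds, hDDs, hDs, hDsmax⟩ :=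
    zorn_subset_nonempty {E | A.Conv E ∧ D ⊆ E ∧ Disjoint Cs E}
      (fun c hc hchain hne => ⟨⋃₀ c,
        ⟨A.conv_sUnion_chain hchain (fun E hE => (hc hE).1),
          hne.elim fun E hE => (hc hE).2.1.trans (Set.subset_sUnion_of_mem hE),
          Set.disjoint_sUnion_right.mpr fun E hE => (hc hE).2.2⟩,
        fun E hE => Set.subset_sUnion_of_mem hE⟩)
      D ⟨hD, subset_rfl, hCsD'⟩
  obtain ⟨hDsConv, hDsD, hDsCs⟩ := hDs
  -- the union covers M
  have hcover : ∀ w : M, w ∈ Cs ∨ w ∈ Ds := by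
    intro w
    by_contra hcon
    push_neg at hcon
    obtain ⟨hwCs, hwDs⟩ := hcon
    -- join Cs with w must meet Ds
    have h1 : ¬ Disjoint (A.join Cs w) D := by
      intro hdj
      have hmem : A.join Cs w ∈ {E | A.Conv E ∧ C ⊆ E ∧ Disjoint E D} :=
        ⟨A.conv_join hCsConv w, hCsC.trans (A.subset_join Cs w), hdj⟩
      have := hCsmax hmem (A.subset_join Cs w)
      exact hwCs (this (A.mem_join Cs w))
    obtain ⟨j, hjJ, hjD⟩ := Set.not_disjoint_iff.mp h1
    rcases hjJ with ⟨c, hc, hjc⟩ | hjw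
    swap
    · simp only [Set.mem_singleton_iff] at hjw; subst hjw
      exact hwDs (hDsD hjD)
    have h2 : ¬ Disjoint Cs (A.join Ds w) := by
      intro hdj
      have hmem : A.join Ds w ∈ {E | A.Conv E ∧ D ⊆ E ∧ Disjoint Cs E} :=
        ⟨A.conv_join hDsConv w, hDsD.trans (A.subset_join Ds w), hdj⟩
      have := hDsmax hmem (A.subset_join Ds w)
      exact hwDs (this (A.mem_join Ds w))
    obtain ⟨j', hj'Cs, hj'J⟩ := Set.not_disjoint_iff.mp h2
    rcases hj'J with ⟨d, hd, hj'd⟩ | hj'w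
    swap
    · simp only [Set.mem_singleton_iff] at hj'w; subst hj'w
      exact hwCs hj'Cs
    -- the contradiction point
    have hz₀C : A.m c j j' ∈ Cs := hCsConv c hc j' hj'Cs (A.m_mem_I' c j j')
    have hz₀D : A.m c j j' ∈ Ds := hDsConv j (hDsD hjD) d hd (zKey hjc hj'd)
    exact hDsCs.ne_of_mem hz₀C hz₀D rfl
  have hDsCsc : Ds ⊆ Csᶜ := fun t ht hc => (hDsCs.ne_of_mem hc ht) rfl
  have hcomp : Csᶜ = Ds :=
    Set.Subset.antisymm (fun t ht => (hcover t).resolve_left ht) hDsCsc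
  refine ⟨Cs, ⟨hCsConv, ?_⟩, hCsC, fun dd hdd => hDsCsc (hDsD hdd)⟩
  rw [hcomp]; exact hDsConv

lemma mem_sep_iff {A : MedianAlgebra M} {H : Set M} {x y : M} :
    H ∈ A.sep {x} {y} ↔ A.Halfspace H ∧ x ∈ H ∧ y ∉ H := by
  simp [sep, Set.singleton_subset_iff]

lemma I_self (x : M) : A.I x x = {x} := by
  apply Set.Subset.antisymm
  · intro z hz
    have : z = A.m x x z := hz
    rw [A.idem] at this
    exact this
  · intro z hz
    simp only [Set.mem_singleton_iff] at hz
    subst hz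
    exact A.left_mem_I z z

lemma exists_sep_of_ne {A : MedianAlgebra M} {x y z w : M}
    (hz : z ∈ A.I x y) (hw : w ∈ A.I x y) (hne : z ≠ w) :
    ∃ H ∈ A.sep {x} {y}, (z ∈ H ∧ w ∉ H) ∨ (w ∈ H ∧ z ∉ H) := by
  have hkey : Disjoint (A.I x z) (A.I y w) ∨ Disjoint (A.I x w) (A.I y z) := by
    by_contra hcon
    push_neg at hcon
    obtain ⟨a, haxz, hayw⟩ := Set.not_disjoint_iff.mp hcon.1
    obtain ⟨b, hbxw, hbyz⟩ := Set.not_disjoint_iff.mp hcon.2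
    have hw2 : w ∈ A.I x z := I_trans (L2 hw hayw) haxz
    have hz2 : z ∈ A.I x w := I_trans (L2 hz hbyz) hbxw
    exact hne (I_antisymm hz2 hw2)
  rcases hkey with h | h
  · obtain ⟨H, hH, h1, h2⟩ := sep_thm (A.conv_I x z) (A.conv_I y w) h
    refine ⟨H, mem_sep_iff.mpr ⟨hH, h1 (A.left_mem_I x z), h2 (A.left_mem_I y w)⟩,
      Or.inl ⟨h1 (A.right_mem_I x z), h2 (A.right_mem_I y w)⟩⟩
  · obtain ⟨H, hH, h1, h2⟩ := sep_thm (A.conv_I x w) (A.conv_I y z) h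
    refine ⟨H, mem_sep_iff.mpr ⟨hH, h1 (A.left_mem_I x w), h2 (A.left_mem_I y z)⟩,
      Or.inr ⟨h1 (A.right_mem_I x w), h2 (A.right_mem_I y z)⟩⟩

lemma I_finite_card {A : MedianAlgebra M} {x y : M} (hS : (A.sep {x} {y}).Finite) :
    (A.I x y).Finite ∧ (A.I x y).ncard ≤ 2 ^ (A.sep {x} {y}).ncard := by
  classical
  set s : Finset (Set M) := hS.toFinset with hs
  set ψ : M → Finset (Set M) := fun z => s.filter (fun H => z ∈ H) with hψ
  have hmemψ : ∀ z H, H ∈ ψ z ↔ H ∈ A.sep {x} {y} ∧ z ∈ H := by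
    intro z H
    simp [hψ, hs, Finset.mem_filter, Set.Finite.mem_toFinset]
  have hinj : Set.InjOn ψ (A.I x y) := by
    intro z hz w hw heq
    by_contra hne
    obtain ⟨H, hHmem, hsplit⟩ := exists_sep_of_ne hz hw hne
    rcases hsplit with ⟨h1, h2⟩ | ⟨h1, h2⟩
    · have : H ∈ ψ z := (hmemψ z H).mpr ⟨hHmem, h1⟩
      rw [heq] at this
      exact h2 ((hmemψ w H).mp this).2
    · have : H ∈ ψ w := (hmemψ w H).mpr ⟨hHmem, h1⟩
      rw [← heq] at this
      exact h2 ((hmemψ z H).mp this).2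
  have himg : ψ '' (A.I x y) ⊆ ↑s.powerset := by
    rintro T ⟨z, _, rfl⟩
    simp only [Finset.coe_powerset, Set.mem_preimage, Set.mem_powerset_iff,
      Finset.coe_subset]
    exact Finset.filter_subset _ _
  have hfin : (A.I x y).Finite :=
    Set.Finite.of_finite_image (s.powerset.finite_toSet.subset himg) hinj
  refine ⟨hfin, ?_⟩
  calc (A.I x y).ncard = (ψ '' (A.I x y)).ncard := (Set.ncard_image_of_injOn hinj).symm
  _ ≤ (↑s.powerset : Set (Finset (Set M))).ncard :=
      Set.ncard_le_ncard himg s.powerset.finite_toSet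
  _ = s.powerset.card := Set.ncard_coe_finset _
  _ = 2 ^ s.card := Finset.card_powerset s
  _ = 2 ^ (A.sep {x} {y}).ncard := by rw [Set.ncard_eq_toFinset_card _ hS]

lemma sep_self (x : M) : A.sep {x} {x} = ∅ := by
  ext H
  simp only [mem_sep_iff, Set.mem_empty_iff_false, iff_false]
  rintro ⟨_, hx, hx'⟩
  exact hx' hx

lemma sep_nonempty {A : MedianAlgebra M} {x y : M} (hne : x ≠ y) :
    (A.sep {x} {y}).Nonempty := by
  obtain ⟨H, hH, h1, h2⟩ := sep_thm (A.conv_singleton x) (A.conv_singleton y)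
    (Set.disjoint_singleton.mpr hne)
  exact ⟨H, ⟨hH, h1, h2⟩⟩

lemma sep_split {A : MedianAlgebra M} {x y w : M} (hw : w ∈ A.I x y) :
    A.sep {x} {y} = A.sep {x} {w} ∪ A.sep {w} {y} := by
  ext H
  simp only [mem_sep_iff, Set.mem_union]
  constructor
  · rintro ⟨hH, hx, hy⟩
    by_cases hwH : w ∈ H
    · exact Or.inr ⟨hH, hwH, hy⟩
    · exact Or.inl ⟨hH, hx, hwH⟩
  · rintro (⟨hH, hx, hwH⟩ | ⟨hH, hwH, hy⟩)
    · refine ⟨hH, hx, fun hy => hwH (hH.1 x hx y hy hw)⟩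
    · refine ⟨hH, ?_, hy⟩
      by_contra hx
      exact (hH.2 x hx y hy hw) hwH

lemma sep_split_card {A : MedianAlgebra M} (hdisc : ∀ x y : M, (A.sep {x} {y}).Finite)
    {x y w : M} (hw : w ∈ A.I x y) :
    (A.sep {x} {y}).ncard = (A.sep {x} {w}).ncard + (A.sep {w} {y}).ncard := by
  rw [sep_split hw]
  apply Set.ncard_union_eq ?_ (hdisc x w) (hdisc w y)
  rw [Set.disjoint_left]
  intro H h1 h2
  exact (h1.2.2 (Set.mem_singleton w)) (h2.2.1 (Set.mem_singleton w))

lemma sep_ncard_one {A : MedianAlgebra M} {w y : M} (hne : w ≠ y)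
    (hI : A.I w y = {w, y}) : (A.sep {w} {y}).ncard = 1 := by
  obtain ⟨H₀, hH₀⟩ := sep_nonempty hne
  have gate : ∀ H ∈ A.sep {w} {y}, ∀ z, z ∈ H ↔ A.m w y z = w := by
    rintro H ⟨hH, hwH, hyH⟩ z
    rw [Set.singleton_subset_iff] at hwH hyH
    have hg : A.m w y z ∈ ({w, y} : Set M) := hI ▸ A.m_mem_I w y z
    constructor
    · intro hz
      have hgH : A.m w y z ∈ H := hH.1 w hwH z hz (A.m_mem_I' w y z)
      rcases hg with h | h
      · exact h
      · rw [h] at hgH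
        exact absurd hgH hyH
    · intro hgw
      by_contra hz
      have hgH : A.m w y z ∈ Hᶜ := hH.2 y hyH z hz (A.m_mem_I'' w y z)
      exact hgH (by rw [hgw]; exact hwH)
  have huniq : ∀ H ∈ A.sep {w} {y}, H = H₀ := by
    intro H hH
    ext z
    rw [gate H hH z, gate H₀ hH₀ z]
  have : A.sep {w} {y} = {H₀} := by
    apply Set.Subset.antisymm
    · intro H hH; exact huniq H hH
    · intro H hH; simp only [Set.mem_singleton_iff] at hH; exact hH ▸ hH₀
  rw [this, Set.ncard_singleton]

lemma lower_bound {A : MedianAlgebra M} (hdisc : ∀ x y : M, (A.sep {x} {y}).Finite) :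
    ∀ n : ℕ, ∀ x y : M, (A.sep {x} {y}).ncard = n → n + 1 ≤ (A.I x y).ncard := by
  intro n
  induction n using Nat.strong_induction_on with
  | _ n IH =>
  intro x y hn
  by_cases hxy : x = y
  · subst hxy
    rw [A.sep_self x, Set.ncard_empty] at hn
    rw [A.I_self x, Set.ncard_singleton]
    omega
  · have hIfin : (A.I x y).Finite := (I_finite_card (hdisc x y)).1
    have hn1 : 1 ≤ n := by
      rw [← hn]
      exact (Set.ncard_pos (hdisc x y)).mpr (sep_nonempty hxy)
    have hFfin : ((A.I x y) \ {y}).Finite := hIfin.diff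
    have hFne : ((A.I x y) \ {y}).Nonempty := ⟨x, A.left_mem_I x y, by simpa using hxy⟩
    obtain ⟨w, hwF, hwmin⟩ :=
      Set.exists_min_image _ (fun w => (A.sep {w} {y}).ncard) hFfin hFne
    have hwI : w ∈ A.I x y := hwF.1
    have hwy : w ≠ y := by simpa using hwF.2
    have hIwy : A.I w y = {w, y} := by
      apply Set.Subset.antisymm
      · intro w' hw'
        by_contra hw'mem
        simp only [Set.mem_insert_iff, Set.mem_singleton_iff, not_or] at hw'mem
        obtain ⟨hw'w, hw'y⟩ := hw'mem
        have hw'I : w' ∈ A.I x y := A.conv_I x y w hwI y (A.right_mem_I x y) hw'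
        have hsplit := sep_split_card hdisc hw'
        have h1 : 0 < (A.sep {w} {w'}).ncard :=
          (Set.ncard_pos (hdisc w w')).mpr (sep_nonempty (Ne.symm hw'w))
        have hmin := hwmin w' ⟨hw'I, by simpa using hw'y⟩
        omega
      · rintro w' (rfl | rfl)
        · exact A.left_mem_I _ _
        · exact A.right_mem_I _ _
    have hd1 : (A.sep {w} {y}).ncard = 1 := sep_ncard_one hwy hIwy
    have hsplit : n = (A.sep {x} {w}).ncard + 1 := by
      rw [← hn, sep_split_card hdisc hwI, hd1]
    have hIH : (n - 1) + 1 ≤ (A.I x w).ncard := by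
      apply IH (n - 1) (by omega) x w
      omega
    have hsub : A.I x w ⊂ A.I x y := by
      constructor
      · intro z hz
        exact A.conv_I x y x (A.left_mem_I x y) w hwI hz
      · intro hcontra
        have hyxw : y ∈ A.I x w := hcontra (A.right_mem_I x y)
        exact hwy (I_antisymm hwI hyxw)
    have hlt := Set.ncard_lt_ncard hsub hIfin
    omega

end MedianAlgebra

theorem interval_card_bounds {M : Type*} (A : MedianAlgebra M)
    (hdisc : ∀ x y : M, (A.sep {x} {y}).Finite) (x y : M) :
    (A.sep {x} {y}).ncard + 1 ≤ (A.I x y).ncard ∧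
    (A.I x y).ncard ≤ 2 ^ (A.sep {x} {y}).ncard :=
  ⟨MedianAlgebra.lower_bound hdisc _ x y rfl, (MedianAlgebra.I_finite_card (hdisc x y)).2⟩
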